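/- arXiv:2302.00350 — 2 statements merged into one kernel-verified Lean document; each statement's English description precedes it below -/
import Mathlib

section
/- Let m, n ≥ 2 be integers and let b₂, …, b_m and c₂, …, c_n be complex numbers with c₂ ≠ 0. In the polynomial ring ℂ[X, Y, Z], let I be the ideal generated by g₁ = Y − ∑_{i=2}^{m} bᵢ Xⁱ and g₂ = Z² + ∑_{i=2}^{n} cᵢ Xⁱ, and let J be the ideal generated by Y and Z² + c₂ X². Then for every p ∈ I and every natural number d, if the homogeneous component of p vanishes in every degree strictly less than d, then the homogeneous component of p of degree d lies in J. (Consequently the ideal of initial forms of I — the tangent cone ideal at the origin of the curve {g₁ = g₂ = 0} — equals J, so this curve has an ordinary double point at the origin.) -/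
/-!
Let `φ` substitute `X 1 ↦ B := ∑ bᵢ X₀ⁱ`. It kills `g₁ = X 1 - B` and fixes `g₂`, so for
`p ∈ I` we get `p = φ p + (p - φ p)` with `φ p` a multiple of `g₂` and `p - φ p` a multiple
of `g₁`. Since `φ` maps the ideal of the origin into itself, both summands inherit from `p` the
property of lying in the `d`-th power of that ideal. Over a domain orders of power series add
up, so the degree `d` component of `u * v` is a multiple of the lowest form of `v`: of `X 1` for
`v = g₁` and of `X 2 ^ 2 + c₂ X 0 ^ 2` for `v = g₂`.
-/

namespace MvPolynomial

variable {σ R : Type*} [CommRing R]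

theorem mem_pow_idealOfVars_iff_homogeneousComponent_eq_zero {d : ℕ} {p : MvPolynomial σ R} :
    p ∈ idealOfVars σ R ^ d ↔ ∀ e < d, homogeneousComponent e p = 0 := by
  rw [mem_pow_idealOfVars_iff']
  refine ⟨fun h e he => ?_, fun h x hx => ?_⟩
  · ext x
    rw [coeff_homogeneousComponent, coeff_zero]
    split_ifs with hx
    · exact h x (hx ▸ he)
    · rfl
  · simpa [coeff_homogeneousComponent] using congr(coeff x $(h _ hx))

theorem mem_pow_idealOfVars_iff_le_order {d : ℕ} {p : MvPolynomial σ R} :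
    p ∈ idealOfVars σ R ^ d ↔ (d : ℕ∞) ≤ (p : MvPowerSeries σ R).order := by
  rw [mem_pow_idealOfVars_iff']
  refine ⟨fun h => MvPowerSeries.nat_le_order fun x hx => ?_, fun h x hx => ?_⟩
  · rw [coeff_coe]
    exact h x hx
  · rw [← coeff_coe]
    exact MvPowerSeries.coeff_of_lt_order ((Nat.cast_lt.mpr hx).trans_le h)

theorem coe_homogeneousComponent (d : ℕ) (p : MvPolynomial σ R) :
    ((homogeneousComponent d p : MvPolynomial σ R) : MvPowerSeries σ R) =
      MvPowerSeries.homogeneousComponent d (p : MvPowerSeries σ R) := by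
  ext x
  rw [coeff_coe, coeff_homogeneousComponent, MvPowerSeries.coeff_homogeneousComponent, coeff_coe]

theorem sum_C_mul_X_pow_mem_pow_idealOfVars {k : ℕ} (s : Finset ℕ) (hs : ∀ i ∈ s, k ≤ i)
    (a : ℕ → R) (j : σ) : ∑ i ∈ s, C (a i) * X j ^ i ∈ idealOfVars σ R ^ k :=
  Ideal.sum_mem _ fun i hi => Ideal.mul_mem_left _ _ <|
    Ideal.pow_le_pow_right (hs i hi) <|
      Ideal.pow_mem_pow (Ideal.subset_span (Set.mem_range_self j)) i

theorem aeval_mem_pow_idealOfVars {g : σ → MvPolynomial σ R}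
    (hg : ∀ i, g i ∈ idealOfVars σ R) {d : ℕ} {p : MvPolynomial σ R}
    (hp : p ∈ idealOfVars σ R ^ d) :
    aeval (R := R) g p ∈ idealOfVars σ R ^ d := by
  have hmap : (idealOfVars σ R).map (aeval (R := R) g) ≤ idealOfVars σ R := by
    rw [Ideal.map_span, Ideal.span_le, ← Set.range_comp]
    rintro _ ⟨i, rfl⟩
    simpa using hg i
  exact Ideal.pow_right_mono hmap d <|
    Ideal.map_pow (aeval (R := R) g) _ d ▸ Ideal.mem_map_of_mem _ hp

theorem sub_aeval_update_X_mem_span_singleton [DecidableEq σ] (i : σ) (B p : MvPolynomial σ R) :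
    p - aeval (R := R) (Function.update X i B) p ∈ Ideal.span {X i - B} := by
  rw [← Ideal.Quotient.eq]
  suffices h : (Ideal.Quotient.mkₐ R (Ideal.span {X i - B})).comp
      (aeval (R := R) (Function.update X i B)) = Ideal.Quotient.mkₐ R _ from (congr($h p)).symm
  ext j
  rcases eq_or_ne j i with rfl | hj
  · simp only [AlgHom.comp_apply, aeval_X, Function.update_self, Ideal.Quotient.mkₐ_eq_mk]
    exact (Ideal.Quotient.eq.mpr (Ideal.mem_span_singleton_self _)).symm
  · simp [Function.update_of_ne hj]

section LowestForm

variable {k : ℕ} {V h : MvPolynomial σ R}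

theorem order_coe_isHomogeneous_add (hV : V.IsHomogeneous k) (hV0 : V ≠ 0)
    (hh : h ∈ idealOfVars σ R ^ (k + 1)) :
    ((V + h : MvPolynomial σ R) : MvPowerSeries σ R).order = k := by
  rw [mem_pow_idealOfVars_iff'] at hh
  have hVk : ∀ x, coeff x V ≠ 0 → x.degree = k := fun x hx =>
    by_contra fun hxk => hx (hV.coeff_eq_zero hxk)
  obtain ⟨x, hx⟩ := ne_zero_iff.mp hV0
  refine MvPowerSeries.order_eq_nat.mpr ⟨⟨x, ?_, hVk x hx⟩, fun y hy => ?_⟩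
  · rwa [coeff_coe, coeff_add, hh x (by rw [hVk x hx]; omega), add_zero]
  · rw [coeff_coe, coeff_add, hh y (by omega), add_zero]
    exact by_contra fun hy' => hy.ne (hVk y hy')

theorem homogeneousComponent_isHomogeneous_add (hV : V.IsHomogeneous k)
    (hh : h ∈ idealOfVars σ R ^ (k + 1)) :
    homogeneousComponent k (V + h) = V := by
  rw [map_add, homogeneousComponent_of_mem hV, if_pos rfl,
    mem_pow_idealOfVars_iff_homogeneousComponent_eq_zero.mp hh k k.lt_succ_self, add_zero]

theorem homogeneousComponent_mul_isHomogeneous_add_mem_span [NoZeroDivisors R] {d : ℕ}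
    {u : MvPolynomial σ R} (hV : V.IsHomogeneous k) (hV0 : V ≠ 0)
    (hh : h ∈ idealOfVars σ R ^ (k + 1)) (hd : u * (V + h) ∈ idealOfVars σ R ^ d) :
    homogeneousComponent d (u * (V + h)) ∈ Ideal.span {V} := by
  have hord := order_coe_isHomogeneous_add hV hV0 hh
  rw [mem_pow_idealOfVars_iff_le_order, coe_mul, MvPowerSeries.order_mul, hord] at hd
  rcases lt_or_ge d k with hdk | hkd
  · have hk : u * (V + h) ∈ idealOfVars σ R ^ k := by
      rw [mem_pow_idealOfVars_iff_le_order, coe_mul, MvPowerSeries.order_mul, hord]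
      exact le_add_self
    rw [mem_pow_idealOfVars_iff_homogeneousComponent_eq_zero.mp hk d hdk]
    exact zero_mem _
  · obtain ⟨e, rfl⟩ := Nat.exists_eq_add_of_le' hkd
    have hu : (e : ℕ∞) ≤ (u : MvPowerSeries σ R).order := by
      push_cast at hd
      exact (ENat.add_le_add_iff_right (ENat.natCast_ne_top k)).mp hd
    have hprod : homogeneousComponent (e + k) (u * (V + h)) = homogeneousComponent e u * V := by
      apply coe_injective
      rw [coe_mul, coe_homogeneousComponent, coe_mul,
        MvPowerSeries.homogeneousComponent_mul_of_le_order hu hord.ge,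
        ← coe_homogeneousComponent, ← coe_homogeneousComponent,
        homogeneousComponent_isHomogeneous_add hV hh]
    rw [hprod]
    exact Ideal.mul_mem_left _ _ (Ideal.mem_span_singleton_self V)

end LowestForm

theorem homogeneousComponent_mem_span_pair_of_mem_span_pair [DecidableEq σ] [IsDomain R]
    {i : σ} {B G h p : MvPolynomial σ R} {k d : ℕ} (hB : B ∈ idealOfVars σ R ^ 2)
    (hG : G.IsHomogeneous k) (hG0 : G ≠ 0) (hh : h ∈ idealOfVars σ R ^ (k + 1))
    (hBfix : aeval (R := R) (Function.update X i B) B = B)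
    (hfix : aeval (R := R) (Function.update X i B) (G + h) = G + h)
    (hp : p ∈ Ideal.span {X i - B, G + h}) (hpd : p ∈ idealOfVars σ R ^ d) :
    homogeneousComponent d p ∈ Ideal.span {X i, G} := by
  set φ := aeval (R := R) (Function.update X i B)
  have hφ : ∀ j, Function.update X i B j ∈ idealOfVars σ R := by
    intro j
    rw [Function.update_apply]
    split_ifs
    exacts [Ideal.pow_le_self two_ne_zero hB, Ideal.subset_span ⟨j, rfl⟩]
  obtain ⟨q₁, q₂, hpq⟩ := Ideal.mem_span_pair.mp hp
  have hφp : φ p = φ q₂ * (G + h) := by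
    rw [← hpq, map_add, map_mul, map_mul, map_sub, hBfix, hfix, aeval_X, Function.update_self,
      sub_self, mul_zero, zero_add]
  have hφd : φ p ∈ idealOfVars σ R ^ d := aeval_mem_pow_idealOfVars hφ hpd
  obtain ⟨s, hs⟩ := Ideal.mem_span_singleton'.mp (sub_aeval_update_X_mem_span_singleton i B p)
  have hsplit : p = φ q₂ * (G + h) + s * (X i + -B) := by
    rw [← hφp, ← sub_eq_add_neg, hs]
    ring
  rw [hsplit, map_add]
  refine add_mem (Ideal.span_mono ?_ (homogeneousComponent_mul_isHomogeneous_add_mem_span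
    hG hG0 hh ?_)) (Ideal.span_mono ?_ (homogeneousComponent_mul_isHomogeneous_add_mem_span
    (isHomogeneous_X R i) (X_ne_zero i) (neg_mem hB) ?_))
  · simp
  · rwa [← hφp]
  · simp
  · rw [← sub_eq_add_neg, hs]
    exact sub_mem hpd hφd

end MvPolynomial

open MvPolynomial

theorem tangent_cone_ideal_of_node_general
    (m n : ℕ) (hn : 2 ≤ n)
    (b c : ℕ → ℂ) (hc2 : c 2 ≠ 0)
    (g₁ g₂ : MvPolynomial (Fin 3) ℂ)
    (hg₁ : g₁ = X 1 - ∑ i ∈ Finset.Icc 2 m, C (b i) * X 0 ^ i)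
    (hg₂ : g₂ = X 2 ^ 2 + ∑ i ∈ Finset.Icc 2 n, C (c i) * X 0 ^ i)
    (I : Ideal (MvPolynomial (Fin 3) ℂ)) (hI : I = Ideal.span {g₁, g₂})
    (J : Ideal (MvPolynomial (Fin 3) ℂ))
    (hJ : J = Ideal.span {X 1, X 2 ^ 2 + C (c 2) * X 0 ^ 2}) :
    ∀ p ∈ I, ∀ d : ℕ,
      (∀ e < d, homogeneousComponent e p = 0) →
      homogeneousComponent d p ∈ J := by
  intro p hp d hpd
  set G : MvPolynomial (Fin 3) ℂ := X 2 ^ 2 + C (c 2) * X 0 ^ 2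
  have hG : G.IsHomogeneous 2 :=
    (isHomogeneous_X_pow 2 2).add (isHomogeneous_C_mul_X_pow (c 2) 0 2)
  have hG0 : G ≠ 0 := fun hG0 => hc2 (by simpa [G] using congr(eval ![1, 0, 0] $hG0))
  have hg₂G : g₂ = G + ∑ i ∈ Finset.Ioc 2 n, C (c i) * X 0 ^ i := by
    rw [hg₂, ← Finset.add_sum_Ioc_eq_sum_Icc hn, ← add_assoc]
  set B : MvPolynomial (Fin 3) ℂ := ∑ i ∈ Finset.Icc 2 m, C (b i) * X 0 ^ i
  have hBfix : aeval (R := ℂ) (Function.update X 1 B) B = B := by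
    simp [B]
  have hfix : aeval (R := ℂ) (Function.update X 1 B) g₂ = g₂ := by
    simp [hg₂]
  rw [hI, hg₁, hg₂G] at hp
  rw [hg₂G] at hfix
  rw [hJ]
  exact homogeneousComponent_mem_span_pair_of_mem_span_pair
    (sum_C_mul_X_pow_mem_pow_idealOfVars _ (fun i hi => (Finset.mem_Icc.mp hi).1) b 0) hG hG0
    (sum_C_mul_X_pow_mem_pow_idealOfVars _ (fun i hi => (Finset.mem_Ioc.mp hi).1) c 0)
    hBfix hfix hp
    (mem_pow_idealOfVars_iff_homogeneousComponent_eq_zero.mpr hpd)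

theorem tangent_cone_ideal_of_node
    (m n : ℕ) (hm : 2 ≤ m) (hn : 2 ≤ n)
    (b c : ℕ → ℂ) (hc2 : c 2 ≠ 0)
    (g₁ g₂ : MvPolynomial (Fin 3) ℂ)
    (hg₁ : g₁ = X 1 - ∑ i ∈ Finset.Icc 2 m, C (b i) * X 0 ^ i)
    (hg₂ : g₂ = X 2 ^ 2 + ∑ i ∈ Finset.Icc 2 n, C (c i) * X 0 ^ i)
    (I : Ideal (MvPolynomial (Fin 3) ℂ)) (hI : I = Ideal.span {g₁, g₂})
    (J : Ideal (MvPolynomial (Fin 3) ℂ))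
    (hJ : J = Ideal.span {X 1, X 2 ^ 2 + C (c 2) * X 0 ^ 2}) :
    ∀ p ∈ I, ∀ d : ℕ,
      (∀ e < d, homogeneousComponent e p = 0) →
      homogeneousComponent d p ∈ J :=
  tangent_cone_ideal_of_node_general m n hn b c hc2 g₁ g₂ hg₁ hg₂ I hI J hJ
end

section
/- In ℂ[x, y, z], set F = x³ + y³ + z³, and define D_H = x·y·F and D₆ = (z−2y)²·y·F + (z−2x)²·x·F + (x−y)²·(x−2y)²·x·y. Then D_H and D₆ are relatively prime: every common divisor of D_H and D₆ in ℂ[x, y, z] is a unit. (In particular the plane curves {D_H = 0} and {D₆ = 0} have no common component.) -/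
/-!
Each factor of `D_H = x y F` is coprime to `D₆`; since every factor but `F` is irreducible, it
suffices to find a point where it vanishes and the other polynomial does not. For `x` and `y` that
is a point of `D₆ ≠ 0` on the line. Modulo `F`, `D₆` is the product of lines
`(x - y)² (x - 2y)² x y`, and none of these lines lies on the Fermat cubic.
-/

open MvPolynomial

namespace MvPolynomial

theorem finSuccEquiv_rename_succ {R : Type*} [CommSemiring R] {n : ℕ}
    (q : MvPolynomial (Fin n) R) : finSuccEquiv R n (rename Fin.succ q) = Polynomial.C q := by
  have : (finSuccEquiv R n).toAlgHom.comp (rename Fin.succ) = Polynomial.CAlgHom :=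
    algHom_ext fun i => by simp [finSuccEquiv_X_succ]
  exact DFunLike.congr_fun this q

theorem prime_X_zero_sub_rename_succ {R : Type*} [CommRing R] [IsDomain R] {n : ℕ}
    (q : MvPolynomial (Fin n) R) :
    Prime (X 0 - rename Fin.succ q : MvPolynomial (Fin (n + 1)) R) := by
  rw [← MulEquiv.prime_iff (finSuccEquiv R n)]
  simpa [finSuccEquiv_X_zero, finSuccEquiv_rename_succ] using Polynomial.prime_X_sub_C q

theorem isRelPrime_of_eval_eq_zero {σ R : Type*} [CommSemiring R] {p q : MvPolynomial σ R}
    (hp : Irreducible p) (x : σ → R) (hpx : eval x p = 0) (hqx : eval x q ≠ 0) :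
    IsRelPrime p q :=
  hp.isRelPrime_iff_not_dvd.mpr fun ⟨r, hr⟩ => hqx (by rw [hr, map_mul, hpx, zero_mul])

end MvPolynomial

theorem discriminant_curves_rel_prime
    (F DH D6 : MvPolynomial (Fin 3) ℂ)
    (hF : F = X 0 ^ 3 + X 1 ^ 3 + X 2 ^ 3)
    (hDH : DH = X 0 * X 1 * F)
    (hD6 : D6 = (X 2 - 2 * X 1) ^ 2 * X 1 * F + (X 2 - 2 * X 0) ^ 2 * X 0 * F +
      (X 0 - X 1) ^ 2 * (X 0 - 2 * X 1) ^ 2 * X 0 * X 1) :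
    IsRelPrime DH D6 := by
  have hL1 : Irreducible (X 0 - X 1 : MvPolynomial (Fin 3) ℂ) := by
    simpa using (prime_X_zero_sub_rename_succ (X 0 : MvPolynomial (Fin 2) ℂ)).irreducible
  have hL2 : Irreducible (X 0 - 2 * X 1 : MvPolynomial (Fin 3) ℂ) := by
    have := prime_X_zero_sub_rename_succ (2 * X 0 : MvPolynomial (Fin 2) ℂ)
    rw [map_mul, map_ofNat, rename_X] at this
    exact this.irreducible
  have hlines_F : IsRelPrime ((X 0 - X 1) ^ 2 * (X 0 - 2 * X 1) ^ 2 * X 0 * X 1) F := by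
    refine (((IsRelPrime.pow_left ?_).mul_left (IsRelPrime.pow_left ?_)).mul_left ?_).mul_left ?_
    · exact isRelPrime_of_eval_eq_zero hL1 ![1, 1, 0] (by simp) (by simp [hF])
    · exact isRelPrime_of_eval_eq_zero hL2 ![2, 1, 0] (by simp) (by simp [hF]; norm_num)
    · exact isRelPrime_of_eval_eq_zero X_prime.irreducible ![0, 1, 0] (by simp) (by simp [hF])
    · exact isRelPrime_of_eval_eq_zero X_prime.irreducible ![1, 0, 0] (by simp) (by simp [hF])
  have hD6_mod_F : D6 = (X 0 - X 1) ^ 2 * (X 0 - 2 * X 1) ^ 2 * X 0 * X 1 +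
      F * ((X 2 - 2 * X 1) ^ 2 * X 1 + (X 2 - 2 * X 0) ^ 2 * X 0) := by
    rw [hD6]; ring
  rw [hDH]
  refine (IsRelPrime.mul_left ?_ ?_).mul_left ?_
  · exact isRelPrime_of_eval_eq_zero X_prime.irreducible ![0, 1, 0] (by simp)
      (by simp [hD6, hF])
  · exact isRelPrime_of_eval_eq_zero X_prime.irreducible ![1, 0, 0] (by simp)
      (by simp [hD6, hF])
  · rwa [hD6_mod_F, IsRelPrime.add_mul_left_right_iff, isRelPrime_comm]
end
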